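/- Let X_{n,n+1} be the size of a uniformly random (n, n+1)-core partition with distinct parts. For each fixed positive integer k, the k-th moment satisfies E[X_{n,n+1}^k] = (n^2/10)^k + O(n^{2k-1}) as n → ∞. -/

import Mathlib

def hook (Y : YoungDiagram) (i j : ℕ) : ℕ :=
  (Y.rowLen i - j) + (Y.colLen j - i) - 1

def IsCore (Y : YoungDiagram) (t : ℕ) : Prop :=
  ∀ c ∈ Y.cells, ¬ (t ∣ hook Y c.1 c.2)

def DistinctParts (Y : YoungDiagram) : Prop :=
  ∀ i : ℕ, 0 < Y.rowLen (i + 1) → Y.rowLen (i + 1) < Y.rowLen i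

def betaSet (Y : YoungDiagram) : Finset ℕ :=
  (Finset.range (Y.colLen 0)).image (fun i => Y.rowLen i + (Y.colLen 0 - 1 - i))

/-!
In a partition into distinct parts, consecutive first-row hook lengths differ by at most 2 and
decrease from the largest hook to 1, so some first-row hook is n or n + 1 as soon as the largest
hook is at least n. Hence the (n, n + 1)-cores with distinct parts are exactly the partitions
into distinct parts whose largest hook (first part plus number of parts, minus one) is below n.
Prepending a first part n + 1 - (number of parts) to such a partition with largest hook below n
gives exactly those with largest hook n + 1, a Fibonacci-type recursion in n. It yields closed
forms in terms of fib n and fib (n + 1) for the sums of the size X and of X², which show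
E[X] = n²/10 + O(n) and E[(X - n²/10)²] = O(n³). A second-order Taylor bound for x ↦ x^k on
[0, n²] then gives E[X^k] = (n²/10)^k + O(n^(2k-1)).
-/

open Finset

theorem abs_pow_sub_pow_sub_mul_le {x y M : ℝ} (hx : |x| ≤ M) (hy : |y| ≤ M) (k : ℕ) :
    |x ^ k - y ^ k - k * y ^ (k - 1) * (x - y)| ≤ k.choose 2 * M ^ (k - 2) * (x - y) ^ 2 := by
  have hM : 0 ≤ M := (abs_nonneg x).trans hx
  induction k with
  | zero => simp
  | succ k ih =>
    have step : x ^ (k + 1) - y ^ (k + 1) - ↑(k + 1) * y ^ (k + 1 - 1) * (x - y) =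
        x * (x ^ k - y ^ k - k * y ^ (k - 1) * (x - y)) + k * y ^ (k - 1) * (x - y) ^ 2 := by
      rcases k with _ | k
      · simp
      · simp only [Nat.add_sub_cancel, pow_succ]
        push_cast
        ring
    rw [step, Nat.choose_succ_succ', Nat.choose_one_right]
    calc
      _ ≤ |x| * |x ^ k - y ^ k - k * y ^ (k - 1) * (x - y)| +
          k * |y| ^ (k - 1) * (x - y) ^ 2 := by
        refine (abs_add_le _ _).trans ?_
        simp only [abs_mul, abs_pow, sq_abs, Nat.abs_cast, le_refl]
      _ ≤ M * (k.choose 2 * M ^ (k - 2) * (x - y) ^ 2) + k * M ^ (k - 1) * (x - y) ^ 2 := by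
        gcongr
      _ = ↑(k + k.choose 2) * M ^ (k + 1 - 2) * (x - y) ^ 2 := by
        rcases k with _ | _ | k
        · simp
        · simp
        · simp only [Nat.add_sub_cancel, show k + 2 + 1 - 2 = k + 1 by omega,
            show k + 2 - 2 = k by omega, pow_succ]
          push_cast
          ring

theorem abs_sum_pow_sub_card_mul_pow_le {ι : Type*} (s : Finset ι) (f : ι → ℝ) {y M : ℝ}
    (hf : ∀ i ∈ s, |f i| ≤ M) (hy : |y| ≤ M) (k : ℕ) :
    |∑ i ∈ s, f i ^ k - #s * y ^ k| ≤
      k * M ^ (k - 1) * |∑ i ∈ s, (f i - y)| +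
        k.choose 2 * M ^ (k - 2) * ∑ i ∈ s, (f i - y) ^ 2 := by
  have split : ∑ i ∈ s, f i ^ k - #s * y ^ k =
      k * y ^ (k - 1) * ∑ i ∈ s, (f i - y) +
        ∑ i ∈ s, (f i ^ k - y ^ k - k * y ^ (k - 1) * (f i - y)) := by
    simp only [sum_sub_distrib, ← mul_sum, sum_const, nsmul_eq_mul]
    ring
  calc
    _ ≤ |k * y ^ (k - 1) * ∑ i ∈ s, (f i - y)| +
        ∑ i ∈ s, |f i ^ k - y ^ k - k * y ^ (k - 1) * (f i - y)| := by
      rw [split]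
      exact (abs_add_le _ _).trans (add_le_add_right (abs_sum_le_sum_abs _ _) _)
    _ ≤ k * M ^ (k - 1) * |∑ i ∈ s, (f i - y)| +
        ∑ i ∈ s, k.choose 2 * M ^ (k - 2) * (f i - y) ^ 2 := by
      rw [abs_mul, abs_mul, abs_pow, Nat.abs_cast]
      gcongr with i hi
      exact abs_pow_sub_pow_sub_mul_le (hf i hi) hy k
    _ = _ := by rw [mul_sum]

theorem exists_eq_or_eq_succ_of_step_le_two {g : ℕ → ℕ} {d : ℕ} : ∀ N,
    (∀ j < N, g j ≤ g (j + 1) + 2) → d ≤ g 0 → g N ≤ d →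
      ∃ j ≤ N, g j = d ∨ g j = d + 1
  | 0, _, h0, _ => ⟨0, le_rfl, .inl (by omega)⟩
  | N + 1, hstep, h0, hN => by
    by_cases hlt : g N ≤ d
    · obtain ⟨j, hj, hgj⟩ :=
        exists_eq_or_eq_succ_of_step_le_two N (fun j hj => hstep j (by omega)) h0 hlt
      exact ⟨j, by omega, hgj⟩
    · have := hstep N (by omega)
      by_cases hN' : g N = d + 1
      · exact ⟨N, by omega, .inr hN'⟩
      · exact ⟨N + 1, le_rfl, .inl (by omega)⟩

section Hooks

open YoungDiagram

variable {Y : YoungDiagram}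

theorem hook_pos {i j : ℕ} (h : (i, j) ∈ Y) : 0 < hook Y i j := by
  have := mem_iff_lt_rowLen.1 h
  have := mem_iff_lt_colLen.1 h
  unfold hook
  omega

theorem hook_le_hook_zero_zero (Y : YoungDiagram) (i j : ℕ) : hook Y i j ≤ hook Y 0 0 := by
  have := Y.rowLen_anti 0 i (Nat.zero_le _)
  have := Y.colLen_anti 0 j (Nat.zero_le _)
  unfold hook
  omega

theorem isCore_of_hook_zero_zero_lt {t : ℕ} (h : hook Y 0 0 < t) : IsCore Y t := by
  rintro ⟨i, j⟩ hc hdvd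
  rw [mem_cells] at hc
  have := Nat.le_of_dvd (hook_pos hc) hdvd
  have := hook_le_hook_zero_zero Y i j
  omega

theorem DistinctParts.colLen_le_colLen_succ_add_one (hY : DistinctParts Y) (j : ℕ) :
    Y.colLen j ≤ Y.colLen (j + 1) + 1 := by
  by_contra! h
  set i := Y.colLen (j + 1)
  have hlong : j < Y.rowLen (i + 1) := mem_iff_lt_rowLen.1 (mem_iff_lt_colLen.2 (by omega))
  have hshort : Y.rowLen i ≤ j + 1 := by
    by_contra! h'
    exact lt_irrefl i (mem_iff_lt_colLen.1 (mem_iff_lt_rowLen.2 h'))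
  have := hY i (by omega)
  omega

theorem DistinctParts.hook_zero_le_hook_zero_succ_add_two (hY : DistinctParts Y) (j : ℕ) :
    hook Y 0 j ≤ hook Y 0 (j + 1) + 2 := by
  have := hY.colLen_le_colLen_succ_add_one j
  unfold hook
  omega

theorem DistinctParts.exists_hook_zero_eq (hY : DistinctParts Y) {d : ℕ} (hd : 0 < d)
    (h : d ≤ hook Y 0 0) : ∃ j < Y.rowLen 0, hook Y 0 j = d ∨ hook Y 0 j = d + 1 := by
  have hend : hook Y 0 (Y.rowLen 0) = 0 := by
    have : Y.colLen (Y.rowLen 0) = 0 := by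
      by_contra! h0
      exact lt_irrefl _ (mem_iff_lt_rowLen.1 (mem_iff_lt_colLen.2 (Nat.pos_of_ne_zero h0)))
    simp [hook, this]
  obtain ⟨j, hj, hgj⟩ := exists_eq_or_eq_succ_of_step_le_two (Y.rowLen 0)
    (fun j _ => hY.hook_zero_le_hook_zero_succ_add_two j) h (by omega)
  refine ⟨j, lt_of_le_of_ne hj ?_, hgj⟩
  rintro rfl
  omega

theorem DistinctParts.isCore_and_isCore_succ_iff (hY : DistinctParts Y) {n : ℕ} (hn : 0 < n) :
    IsCore Y n ∧ IsCore Y (n + 1) ↔ hook Y 0 0 < n := by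
  refine ⟨fun ⟨hn₀, hn₁⟩ => ?_, fun h => ⟨isCore_of_hook_zero_zero_lt h,
    isCore_of_hook_zero_zero_lt (by omega)⟩⟩
  by_contra! h
  obtain ⟨j, hj, hd | hd⟩ := hY.exists_hook_zero_eq hn h
  · exact hn₀ (0, j) (by simpa [mem_iff_lt_rowLen] using hj) (by simp [hd])
  · exact hn₁ (0, j) (by simpa [mem_iff_lt_rowLen] using hj) (by simp [hd])

end Hooks

/-- The row-length lists of the partitions into distinct parts with largest hook below `n`
(see `mem_strictParts`). -/
def strictParts : ℕ → Finset (List ℕ)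
  | 0 => {[]}
  | 1 => {[]}
  | n + 2 => strictParts (n + 1) ∪ (strictParts n).image fun L => (n + 1 - L.length) :: L

theorem length_le_of_forall_pos_add_length_le {L : List ℕ} {n : ℕ}
    (hL : ∀ x ∈ L, 0 < x ∧ x + L.length ≤ n) : L.length ≤ n := by
  cases L with
  | nil => simp
  | cons a t => have := hL a (by simp); omega

theorem mem_strictParts : ∀ {n : ℕ} {L : List ℕ},
    L ∈ strictParts n ↔ L.SortedGT ∧ ∀ x ∈ L, 0 < x ∧ x + L.length ≤ n
  | 0, [] | 1, [] => by simp [strictParts, List.sortedGT_iff_pairwise]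
  | 0, a :: t | 1, a :: t => by
    simp only [strictParts, Finset.mem_singleton, reduceCtorEq, false_iff, not_and]
    intro _ h
    have := h a (by simp)
    simp only [List.length_cons] at this
    omega
  | n + 2, L => by
    simp only [strictParts, Finset.mem_union, Finset.mem_image, mem_strictParts,
      List.sortedGT_iff_pairwise]
    constructor
    · rintro (⟨hL, hx⟩ | ⟨t, ⟨ht, hx⟩, rfl⟩)
      · exact ⟨hL, fun x h => ⟨(hx x h).1, by have := (hx x h).2; omega⟩⟩
      · have := length_le_of_forall_pos_add_length_le hx
        refine ⟨List.pairwise_cons.2 ⟨fun x hxt => ?_, ht⟩, ?_⟩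
        · have := hx x hxt; omega
        · simp only [List.mem_cons, List.length_cons, forall_eq_or_imp]
          exact ⟨by omega, fun x hxt => by have := hx x hxt; omega⟩
    · rintro ⟨hL, hx⟩
      by_cases hbound : ∀ x ∈ L, x + L.length ≤ n + 1
      · exact .inl ⟨hL, fun x h => ⟨(hx x h).1, hbound x h⟩⟩
      right
      obtain _ | ⟨a, t⟩ := L
      · simp at hbound
      simp only [List.pairwise_cons] at hL
      simp only [List.mem_cons, List.length_cons, forall_eq_or_imp] at hx hbound
      obtain ⟨hat, ht⟩ := hL
      have ha : a + t.length = n + 1 := by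
        by_contra hne
        refine hbound ⟨by omega, fun x hxt => ?_⟩
        have := hat x hxt
        omega
      refine ⟨t, ⟨ht, fun x hxt => ⟨(hx.2 x hxt).1, ?_⟩⟩, by rw [← ha]; simp⟩
      have := hat x hxt
      omega

theorem length_le_of_mem_strictParts {n : ℕ} {L : List ℕ} (hL : L ∈ strictParts n) :
    L.length ≤ n :=
  length_le_of_forall_pos_add_length_le (mem_strictParts.1 hL).2

section RowLens

open YoungDiagram

variable {Y : YoungDiagram}

theorem YoungDiagram.rowLen_pos_iff {i : ℕ} : 0 < Y.rowLen i ↔ i < Y.colLen 0 := by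
  rw [← mem_iff_lt_rowLen, mem_iff_lt_colLen]

theorem YoungDiagram.card_eq_sum_rowLens (Y : YoungDiagram) : Y.card = Y.rowLens.sum := by
  have hrow : ∀ c ∈ Y.cells, c.1 ∈ range (Y.colLen 0) := fun c hc => by
    rw [mem_range, ← rowLen_pos_iff, ← mem_iff_lt_rowLen]
    exact Y.up_left_mem le_rfl (Nat.zero_le _) ((mem_cells _).1 hc)
  calc
    Y.card = ∑ i ∈ range (Y.colLen 0), #(Y.row i) := card_eq_sum_card_fiberwise hrow
    _ = ∑ i ∈ range (Y.colLen 0), Y.rowLen i := by simp only [rowLen_eq_card]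
    _ = Y.rowLens.sum := by
      rw [rowLens, sum_eq_multiset_sum, range_val, Multiset.range, Multiset.map_coe,
        Multiset.sum_coe]

theorem distinctParts_iff_sortedGT : DistinctParts Y ↔ Y.rowLens.SortedGT := by
  rw [List.sortedGT_iff_getElem_gt_getElem_of_lt]
  simp only [get_rowLens, length_rowLens]
  constructor
  · intro hY i j hi hj hji
    have : StrictAntiOn Y.rowLen (Set.Iic (Y.colLen 0 - 1)) :=
      strictAntiOn_Iic_of_succ_lt fun m hm => hY m (rowLen_pos_iff.2 (by omega))
    exact this (by simp; omega) (by simp; omega) hji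
  · intro h i hpos
    have hi := rowLen_pos_iff.1 hpos
    exact h (hi := hi) (hj := by omega) (lt_add_one i)

theorem hook_zero_zero_lt_iff {n : ℕ} (hn : 0 < n) :
    hook Y 0 0 < n ↔ ∀ x ∈ Y.rowLens, x + Y.rowLens.length ≤ n := by
  simp only [rowLens, List.mem_map, List.mem_range, List.length_map, List.length_range,
    forall_exists_index, and_imp, forall_apply_eq_imp_iff₂]
  constructor
  · intro h i hi
    have := Y.rowLen_anti 0 i (Nat.zero_le _)
    have := rowLen_pos_iff.2 hi
    unfold hook at h
    omega
  · intro h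
    rcases Nat.eq_zero_or_pos (Y.colLen 0) with h0 | h0
    · have := (rowLen_pos_iff (Y := Y) (i := 0)).not.2 (by omega)
      unfold hook
      omega
    · have := h 0 h0
      unfold hook
      omega

theorem rowLens_mem_strictParts_iff {n : ℕ} (hn : 0 < n) :
    Y.rowLens ∈ strictParts n ↔ DistinctParts Y ∧ IsCore Y n ∧ IsCore Y (n + 1) := by
  rw [mem_strictParts, ← distinctParts_iff_sortedGT, and_congr_right_iff]
  intro hY
  rw [hY.isCore_and_isCore_succ_iff hn, hook_zero_zero_lt_iff hn]
  exact ⟨fun h x hx => (h x hx).2, fun h x hx => ⟨Y.pos_of_mem_rowLens x hx, h x hx⟩⟩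

theorem bijOn_rowLens {n : ℕ} (hn : 0 < n) :
    Set.BijOn rowLens {Y | DistinctParts Y ∧ IsCore Y n ∧ IsCore Y (n + 1)}
      (strictParts n) := by
  refine ⟨fun Y hY => (rowLens_mem_strictParts_iff hn).2 hY,
    fun Y _ Y' _ h => equivListRowLens.injective (Subtype.ext h), fun L hL => ?_⟩
  obtain ⟨hsorted, hL'⟩ := mem_strictParts.1 hL
  have hrow := rowLens_ofRowLens_eq_self (hw := hsorted.sortedGE) fun x hx => (hL' x hx).1
  exact ⟨ofRowLens L hsorted.sortedGE, (rowLens_mem_strictParts_iff hn).1 (by rwa [hrow]), hrow⟩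

end RowLens

theorem sum_strictParts_add_two {M : Type*} [AddCommMonoid M] (n : ℕ) (f : List ℕ → M) :
    ∑ L ∈ strictParts (n + 2), f L =
      ∑ L ∈ strictParts (n + 1), f L +
        ∑ L ∈ strictParts n, f ((n + 1 - L.length) :: L) := by
  rw [strictParts, sum_union, sum_image fun _ _ _ _ h => (List.cons.inj h).2]
  rw [Finset.disjoint_right]
  simp only [Finset.mem_image, forall_exists_index, and_imp]
  rintro _ t ht rfl h
  have hbound := (mem_strictParts.1 h).2 (n + 1 - t.length) (by simp)
  have hlen := length_le_of_mem_strictParts ht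
  simp only [List.length_cons] at hbound
  omega

theorem sum_length_sum_strictParts_add_two (n : ℕ) (g : ℝ → ℝ → ℝ) :
    ∑ L ∈ strictParts (n + 2), g L.length L.sum =
      ∑ L ∈ strictParts (n + 1), g L.length L.sum +
        ∑ L ∈ strictParts n, g (L.length + 1) (L.sum + (n + 1) - L.length) := by
  rw [sum_strictParts_add_two]
  congr 1
  refine sum_congr rfl fun L hL => ?_
  have := length_le_of_mem_strictParts hL
  simp only [List.length_cons, List.sum_cons, Nat.cast_add, Nat.cast_one,
    Nat.cast_sub (by omega : L.length ≤ n + 1)]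
  ring_nf

theorem card_strictParts (n : ℕ) : (#(strictParts n) : ℝ) = Nat.fib (n + 1) := by
  induction n using Nat.twoStepInduction with
  | zero => simp [strictParts]
  | one => simp [strictParts]
  | more n ih0 ih1 =>
    have := sum_length_sum_strictParts_add_two n fun _ _ => 1
    simp only [sum_const, nsmul_eq_mul, mul_one] at this
    rw [this, ih0, ih1, Nat.fib_add_two (n := n + 1)]
    push_cast
    ring

theorem sum_length_strictParts (n : ℕ) :
    5 * ∑ L ∈ strictParts n, (L.length : ℝ) =
      2 * n * Nat.fib (n + 1) - (n + 1) * Nat.fib n := by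
  induction n using Nat.twoStepInduction with
  | zero => simp [strictParts]
  | one => norm_num [strictParts]
  | more n ih0 ih1 =>
    rw [sum_length_sum_strictParts_add_two n fun l _ => l]
    simp only [sum_add_distrib, sum_const, nsmul_eq_mul, mul_one]
    simp only [Nat.fib_add_two, Nat.cast_add, Nat.cast_one, Nat.cast_ofNat] at *
    linear_combination ih0 + ih1 + 5 * card_strictParts n

theorem sum_length_sq_strictParts (n : ℕ) :
    25 * ∑ L ∈ strictParts n, (L.length : ℝ) ^ 2 =
      (5 * n ^ 2 + 3 * n) * Nat.fib (n + 1) - (5 * n ^ 2 + 4 * n - 1) * Nat.fib n := by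
  induction n using Nat.twoStepInduction with
  | zero => simp [strictParts]
  | one => norm_num [strictParts]
  | more n ih0 ih1 =>
    rw [sum_length_sum_strictParts_add_two n fun l _ => l ^ 2]
    simp only [add_sq, mul_one, one_pow, sum_add_distrib, ← mul_sum, sum_const, nsmul_eq_mul]
    simp only [Nat.fib_add_two, Nat.cast_add, Nat.cast_one, Nat.cast_ofNat] at *
    linear_combination ih0 + ih1 + 10 * sum_length_strictParts n + 25 * card_strictParts n

theorem sum_sum_strictParts (n : ℕ) :
    50 * ∑ L ∈ strictParts n, (L.sum : ℝ) =
      (5 * n ^ 2 + 7 * n) * Nat.fib (n + 1) - (6 * n + 6) * Nat.fib n := by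
  induction n using Nat.twoStepInduction with
  | zero => simp [strictParts]
  | one => norm_num [strictParts]
  | more n ih0 ih1 =>
    rw [sum_length_sum_strictParts_add_two n fun _ s => s]
    simp only [sum_add_distrib, sum_sub_distrib, sum_const, nsmul_eq_mul]
    simp only [Nat.fib_add_two, Nat.cast_add, Nat.cast_one, Nat.cast_ofNat] at *
    linear_combination ih0 + ih1 + 50 * (n + 1) * card_strictParts n -
      10 * sum_length_strictParts n

theorem sum_sum_mul_length_strictParts (n : ℕ) :
    50 * ∑ L ∈ strictParts n, (L.sum : ℝ) * L.length =
      (2 * n ^ 3 + 5 * n ^ 2 + 5 * n) * Nat.fib (n + 1) -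
        (n ^ 3 + 6 * n ^ 2 + 5 * n) * Nat.fib n := by
  induction n using Nat.twoStepInduction with
  | zero => simp [strictParts]
  | one => norm_num [strictParts]
  | more n ih0 ih1 =>
    rw [sum_length_sum_strictParts_add_two n fun l s => s * l]
    have e : ∀ l s : ℝ, (s + (n + 1) - l) * (l + 1) = s * l + s + n * l + (n + 1) - l ^ 2 :=
      fun l s => by ring
    simp only [e, sum_add_distrib, sum_sub_distrib, ← mul_sum, sum_const, nsmul_eq_mul]
    simp only [Nat.fib_add_two, Nat.cast_add, Nat.cast_one, Nat.cast_ofNat] at *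
    linear_combination ih0 + ih1 + sum_sum_strictParts n + 10 * n * sum_length_strictParts n +
      50 * (n + 1) * card_strictParts n - 2 * sum_length_sq_strictParts n

theorem sum_sum_sq_strictParts (n : ℕ) :
    1500 * ∑ L ∈ strictParts n, (L.sum : ℝ) ^ 2 =
      (15 * n ^ 4 + 50 * n ^ 3 + 75 * n ^ 2 + 52 * n) * Nat.fib (n + 1) -
        (20 * n ^ 3 + 60 * n ^ 2 + 76 * n + 36) * Nat.fib n := by
  induction n using Nat.twoStepInduction with
  | zero => simp [strictParts]
  | one => norm_num [strictParts]
  | more n ih0 ih1 =>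
    rw [sum_length_sum_strictParts_add_two n fun _ s => s ^ 2]
    have e : ∀ l s : ℝ, (s + (n + 1) - l) ^ 2 =
        s ^ 2 + 2 * (n + 1) * s - 2 * (s * l) + (n + 1) ^ 2 - 2 * (n + 1) * l + l ^ 2 :=
      fun l s => by ring
    simp only [e, sum_add_distrib, sum_sub_distrib, ← mul_sum, sum_const, nsmul_eq_mul]
    simp only [Nat.fib_add_two, Nat.cast_add, Nat.cast_one, Nat.cast_ofNat] at *
    linear_combination ih0 + ih1 + 60 * (n + 1) * sum_sum_strictParts n -
      60 * sum_sum_mul_length_strictParts n + 1500 * (n + 1) ^ 2 * card_strictParts n -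
      600 * (n + 1) * sum_length_strictParts n + 60 * sum_length_sq_strictParts n

theorem sum_le_sq_of_mem_strictParts {n : ℕ} {L : List ℕ} (hL : L ∈ strictParts n) :
    L.sum ≤ n ^ 2 := by
  have hx := (mem_strictParts.1 hL).2
  calc
    L.sum ≤ L.length • n := List.sum_le_card_nsmul _ _ fun x h => by have := hx x h; omega
    _ ≤ n ^ 2 := by
      rw [smul_eq_mul, sq]
      exact Nat.mul_le_mul_right _ (length_le_of_mem_strictParts hL)

theorem abs_sum_sub_le_strictParts {n : ℕ} (hn : 0 < n) :
    |∑ L ∈ strictParts n, ((L.sum : ℝ) - n ^ 2 / 10)| ≤ (n : ℝ) * #(strictParts n) := by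
  have hsum := sum_sum_strictParts n
  rw [sum_sub_distrib, sum_const, nsmul_eq_mul, card_strictParts, abs_le]
  have hF : (Nat.fib n : ℝ) ≤ Nat.fib (n + 1) := by exact_mod_cast Nat.fib_le_fib_succ
  have hn' : (1 : ℝ) ≤ n := by exact_mod_cast hn
  constructor <;> nlinarith [mul_le_mul_of_nonneg_left hF (by linarith : (0 : ℝ) ≤ 6 * n + 6),
    (Nat.cast_nonneg (Nat.fib n) : (0 : ℝ) ≤ _)]

theorem sum_sq_sub_le_strictParts {n : ℕ} (hn : 0 < n) :
    ∑ L ∈ strictParts n, ((L.sum : ℝ) - n ^ 2 / 10) ^ 2 ≤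
      (n : ℝ) ^ 3 * #(strictParts n) := by
  have e : ∀ s : ℝ, (s - n ^ 2 / 10) ^ 2 = s ^ 2 - n ^ 2 / 5 * s + n ^ 4 / 100 :=
    fun s => by ring
  simp only [e, sum_add_distrib, sum_sub_distrib, ← mul_sum, sum_const, nsmul_eq_mul]
  have := sum_sum_sq_strictParts n
  have := sum_sum_strictParts n
  rw [card_strictParts]
  have hF : (Nat.fib n : ℝ) ≤ Nat.fib (n + 1) := by exact_mod_cast Nat.fib_le_fib_succ
  have hF0 : (0 : ℝ) ≤ Nat.fib n := Nat.cast_nonneg _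
  have hn' : (1 : ℝ) ≤ n := by exact_mod_cast hn
  -- The n⁴ terms cancel: 1500 times the left side is
  -- (8n³ + 75n² + 52n) fib (n + 1) + (16n³ - 24n² - 76n - 36) fib n.
  nlinarith [mul_le_mul_of_nonneg_left hF (by positivity : (0 : ℝ) ≤ 16 * n ^ 3),
    mul_nonneg hF0 (by positivity : (0 : ℝ) ≤ 24 * n ^ 2 + 76 * n + 36),
    mul_le_mul_of_nonneg_right (by nlinarith : (75 * n ^ 2 + 52 * n : ℝ) ≤ 127 * n ^ 3)
      (hF0.trans hF)]

theorem abs_div_card_sub_pow_le_strictParts (k : ℕ) {n : ℕ} (hn : 0 < n) :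
    |(∑ L ∈ strictParts n, (L.sum : ℝ) ^ k) / #(strictParts n) - ((n : ℝ) ^ 2 / 10) ^ k| ≤
      (k + k.choose 2) * (n : ℝ) ^ (2 * k - 1) := by
  have hG : (0 : ℝ) < #(strictParts n) := by
    rw [card_strictParts]
    exact_mod_cast Nat.fib_pos.2 n.succ_pos
  have hsum : ∀ L ∈ strictParts n, |(L.sum : ℝ)| ≤ (n : ℝ) ^ 2 := fun L hL => by
    rw [abs_of_nonneg (Nat.cast_nonneg _)]
    exact_mod_cast sum_le_sq_of_mem_strictParts hL
  have hT : |(n : ℝ) ^ 2 / 10| ≤ (n : ℝ) ^ 2 := by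
    rw [abs_of_nonneg (by positivity)]
    linarith [sq_nonneg (n : ℝ)]
  rw [div_sub' hG.ne', abs_div, abs_of_pos hG, div_le_iff₀ hG]
  calc
    _ ≤ k * ((n : ℝ) ^ 2) ^ (k - 1) * |∑ L ∈ strictParts n, ((L.sum : ℝ) - n ^ 2 / 10)| +
        k.choose 2 * ((n : ℝ) ^ 2) ^ (k - 2) *
          ∑ L ∈ strictParts n, ((L.sum : ℝ) - n ^ 2 / 10) ^ 2 :=
      abs_sum_pow_sub_card_mul_pow_le _ _ hsum hT k
    _ ≤ k * ((n : ℝ) ^ 2) ^ (k - 1) * (n * #(strictParts n)) +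
        k.choose 2 * ((n : ℝ) ^ 2) ^ (k - 2) * (n ^ 3 * #(strictParts n)) := by
      gcongr
      · exact abs_sum_sub_le_strictParts hn
      · exact sum_sq_sub_le_strictParts hn
    _ = _ := by
      rcases k with _ | _ | k
      · simp
      · simp
      · rw [show 2 * (k + 2) - 1 = 2 * k + 3 by omega, show k + 2 - 1 = k + 1 by omega,
          show k + 2 - 2 = k by omega]
        ring

theorem stmt19_general (k : ℕ) :
    (fun n : ℕ =>
        (∑ᶠ Y ∈ {Y : YoungDiagram | DistinctParts Y ∧ IsCore Y n ∧ IsCore Y (n + 1)},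
            ((Y.card : ℝ)) ^ k) /
            (({Y : YoungDiagram | DistinctParts Y ∧ IsCore Y n ∧ IsCore Y (n + 1)}.ncard : ℝ)) -
          ((n : ℝ) ^ 2 / 10) ^ k) =O[Filter.atTop]
      (fun n : ℕ => (n : ℝ) ^ (2 * k - 1)) := by
  refine Asymptotics.IsBigO.of_bound (k + k.choose 2) (Filter.eventually_atTop.2 ⟨1, ?_⟩)
  intro n hn
  have hbij := bijOn_rowLens hn
  have hsum : ∑ᶠ Y ∈ {Y : YoungDiagram | DistinctParts Y ∧ IsCore Y n ∧ IsCore Y (n + 1)},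
      (Y.card : ℝ) ^ k = ∑ L ∈ strictParts n, (L.sum : ℝ) ^ k := by
    rw [← finsum_mem_coe_finset]
    exact finsum_mem_eq_of_bijOn _ hbij fun Y _ => by rw [YoungDiagram.card_eq_sum_rowLens]
  rw [hsum, hbij.ncard_eq, Set.ncard_coe_finset, Real.norm_eq_abs,
    Real.norm_of_nonneg (by positivity)]
  exact abs_div_card_sub_pow_le_strictParts k hn

theorem stmt19 (k : ℕ) (hk : 1 ≤ k) :
    (fun n : ℕ =>
        (∑ᶠ Y ∈ {Y : YoungDiagram | DistinctParts Y ∧ IsCore Y n ∧ IsCore Y (n + 1)},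
            ((Y.card : ℝ)) ^ k) /
            (({Y : YoungDiagram | DistinctParts Y ∧ IsCore Y n ∧ IsCore Y (n + 1)}.ncard : ℝ)) -
          ((n : ℝ) ^ 2 / 10) ^ k) =O[Filter.atTop]
      (fun n : ℕ => (n : ℝ) ^ (2 * k - 1)) :=
  stmt19_general k
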